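/- Let (S_k)_{k≥0} be a random walk with i.i.d. steps of mean 0, variance 1, and finite third absolute moment, and suppose there exists a standard Brownian motion (B_t)_{t≥0} on the same probability space with P(max_{0≤k≤n}|S_k − B_k| > n^γ) ≤ C/n^p for some γ ∈ (0,1/2), p > 0, C > 0. Then for any M ≥ √n with n^γ ≤ M/3, the maximal process S*_n = max_{0≤k≤n}|S_k| satisfies P(S*_n ≥ M) ≤ C'·( (√n/M)·e^{−M²/(18n)} + n^{−p} ) for a constant C' depending only on C. -/

import Mathlib

open MeasureTheory ProbabilityTheory
open Real Filter NNReal ENNReal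

section Helpers

lemma int_x_exp {b a : ℝ} (hb : 0 < b) :
    ∫ x in Set.Ioi a, x * Real.exp (-b * x ^ 2) = Real.exp (-b * a ^ 2) / (2 * b) := by
  have hderiv : ∀ x ∈ Set.Ioi a, HasDerivAt (fun x => -Real.exp (-b * x ^ 2) / (2 * b))
      (x * Real.exp (-b * x ^ 2)) x := by
    intro x _
    have h1 : HasDerivAt (fun x : ℝ => -b * x ^ 2) (-b * (2 * x)) x := by
      simpa using ((hasDerivAt_pow 2 x).const_mul (-b))
    have h2 := (h1.exp.neg).div_const (2 * b)
    convert h2 using 1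
    · rfl
    · rfl
    · rfl
    rw [_root_.eq_div_iff (by positivity)]
    ring
  have hint : IntegrableOn (fun x => x * Real.exp (-b * x ^ 2)) (Set.Ioi a) := by
    have := integrable_rpow_mul_exp_neg_mul_sq hb (by norm_num : (-1:ℝ) < 1)
    have h' : Integrable (fun x : ℝ => x * Real.exp (-b * x ^ 2)) := by
      simpa [Real.rpow_one] using this
    exact h'.integrableOn
  have htend : Tendsto (fun x => -Real.exp (-b * x ^ 2) / (2 * b)) atTop (nhds 0) := by
    have h1 : Tendsto (fun x : ℝ => -b * x ^ 2) atTop atBot := by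
      have : Tendsto (fun x : ℝ => x ^ 2) atTop atTop := tendsto_pow_atTop (by norm_num)
      exact (tendsto_const_mul_atBot_of_neg (neg_neg_iff_pos.mpr hb)).mpr this
    have h2 : Tendsto (fun x : ℝ => Real.exp (-b * x ^ 2)) atTop (nhds 0) :=
      Real.tendsto_exp_atBot.comp h1
    simpa using (h2.neg.div_const (2 * b))
  have := integral_Ioi_of_hasDerivAt_of_tendsto
    (Continuous.continuousWithinAt (by fun_prop)) hderiv hint htend
  rw [this]
  ring

lemma gauss_tail {v : ℝ≥0} (hv : 0 < (v : ℝ)) {a : ℝ} (ha : 0 < a) :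
    gaussianReal 0 v {x | a ≤ x} ≤
      ENNReal.ofReal (Real.sqrt v / a * Real.exp (-a ^ 2 / (2 * v))) := by
  have hv' : v ≠ 0 := by exact_mod_cast hv.ne'
  rw [gaussianReal_apply_eq_integral 0 hv']
  apply ENNReal.ofReal_le_ofReal
  have hset : {x : ℝ | a ≤ x} = Set.Ici a := rfl
  rw [hset, integral_Ici_eq_integral_Ioi]
  set b : ℝ := (2 * (v : ℝ))⁻¹ with hb
  have hbpos : 0 < b := by positivity
  have hxint : Integrable (fun x : ℝ => x * Real.exp (-b * x ^ 2)) := by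
    simpa [Real.rpow_one] using integrable_rpow_mul_exp_neg_mul_sq hbpos (by norm_num : (-1:ℝ) < 1)
  have hgle : ∀ x ∈ Set.Ioi a, gaussianPDFReal 0 v x ≤
      (Real.sqrt v)⁻¹ * a⁻¹ * (x * Real.exp (-b * x ^ 2)) := by
    intro x hx
    have hx' : a < x := hx
    unfold gaussianPDFReal
    have hexp : Real.exp (-(x - 0) ^ 2 / (2 * (v:ℝ))) = Real.exp (-b * x ^ 2) := by
      congr 1
      rw [hb]
      field_simp
      ring
    rw [hexp]
    have h1 : (Real.sqrt (2 * Real.pi * v))⁻¹ ≤ (Real.sqrt v)⁻¹ := by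
      apply inv_anti₀ (Real.sqrt_pos.mpr hv)
      apply Real.sqrt_le_sqrt
      nlinarith [Real.pi_gt_three]
    have h2 : Real.exp (-b * x ^ 2) ≤ a⁻¹ * (x * Real.exp (-b * x ^ 2)) := by
      have hxa : 1 ≤ a⁻¹ * x := by
        rw [← div_eq_inv_mul, le_div_iff₀ ha]; linarith
      calc Real.exp (-b * x ^ 2) = 1 * Real.exp (-b * x ^ 2) := (one_mul _).symm
        _ ≤ a⁻¹ * x * Real.exp (-b * x ^ 2) :=
            mul_le_mul_of_nonneg_right hxa (Real.exp_nonneg _)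
        _ = a⁻¹ * (x * Real.exp (-b * x ^ 2)) := by ring
    calc (Real.sqrt (2 * Real.pi * v))⁻¹ * Real.exp (-b * x ^ 2)
        ≤ (Real.sqrt v)⁻¹ * Real.exp (-b * x ^ 2) := by
          apply mul_le_mul_of_nonneg_right h1 (Real.exp_nonneg _)
      _ ≤ (Real.sqrt v)⁻¹ * (a⁻¹ * (x * Real.exp (-b * x ^ 2))) := by
          apply mul_le_mul_of_nonneg_left h2 (by positivity)
      _ = (Real.sqrt v)⁻¹ * a⁻¹ * (x * Real.exp (-b * x ^ 2)) := by ring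
  have hmono : ∫ x in Set.Ioi a, gaussianPDFReal 0 v x ≤
      ∫ x in Set.Ioi a, (Real.sqrt v)⁻¹ * a⁻¹ * (x * Real.exp (-b * x ^ 2)) := by
    apply setIntegral_mono_on
    · exact (integrable_gaussianPDFReal 0 v).integrableOn
    · exact (hxint.const_mul _).integrableOn
    · exact measurableSet_Ioi
    · exact hgle
  refine hmono.trans ?_
  rw [integral_const_mul, int_x_exp hbpos]
  have h2b : 2 * b = (v : ℝ)⁻¹ := by rw [hb]; field_simp
  have hba : -b * a ^ 2 = -a ^ 2 / (2 * (v:ℝ)) := by rw [hb]; field_simp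
  rw [h2b, hba]
  rw [div_inv_eq_mul]
  have hsq : (Real.sqrt v)⁻¹ * a⁻¹ * (Real.exp (-a ^ 2 / (2 * (v:ℝ))) * (v:ℝ)) =
      Real.sqrt v / a * Real.exp (-a ^ 2 / (2 * (v:ℝ))) := by
    have h0 : Real.sqrt v ≠ 0 := by positivity
    field_simp
    linear_combination (-1 : ℝ) * Real.sq_sqrt hv.le
  rw [hsq]

lemma gauss_map_neg (v : ℝ≥0) :
    (gaussianReal 0 v).map (fun x => -x) = gaussianReal 0 v := by
  have h := gaussianReal_map_const_mul (μ := 0) (v := v) (-1)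
  have h1 : (NNReal.mk ((-1:ℝ)^2) (sq_nonneg _)) = 1 := by ext; norm_num
  rw [h1, one_mul, mul_zero] at h
  simpa only [neg_one_mul] using h

lemma gauss_sym (v : ℝ≥0) (s : Set ℝ) (hs : MeasurableSet s) :
    gaussianReal 0 v ((fun x : ℝ => -x) ⁻¹' s) = gaussianReal 0 v s := by
  conv_rhs => rw [← gauss_map_neg v]
  rw [Measure.map_apply measurable_neg hs]

lemma gauss_half_eq (v : ℝ≥0) :
    gaussianReal 0 v {x : ℝ | x ≤ 0} = gaussianReal 0 v {x : ℝ | 0 ≤ x} := by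
  have h := gauss_sym v {x : ℝ | 0 ≤ x} measurableSet_Ici
  rwa [show ((fun x : ℝ => -x) ⁻¹' {x : ℝ | 0 ≤ x}) = {x : ℝ | x ≤ 0} from by ext x; simp] at h

lemma gauss_half_ge (v : ℝ≥0) : (2:ℝ≥0∞)⁻¹ ≤ gaussianReal 0 v {x : ℝ | 0 ≤ x} := by
  have h1 : (1:ℝ≥0∞) ≤ 2 * gaussianReal 0 v {x : ℝ | 0 ≤ x} := by
    calc (1:ℝ≥0∞) = gaussianReal 0 v Set.univ := measure_univ.symm
      _ ≤ gaussianReal 0 v ({x : ℝ | x ≤ 0} ∪ {x : ℝ | 0 ≤ x}) :=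
          measure_mono (fun x _ => le_total x 0)
      _ ≤ gaussianReal 0 v {x : ℝ | x ≤ 0} + gaussianReal 0 v {x : ℝ | 0 ≤ x} :=
          measure_union_le _ _
      _ = 2 * gaussianReal 0 v {x : ℝ | 0 ≤ x} := by rw [gauss_half_eq, two_mul]
  calc (2:ℝ≥0∞)⁻¹ = 2⁻¹ * 1 := (mul_one _).symm
    _ ≤ 2⁻¹ * (2 * gaussianReal 0 v {x : ℝ | 0 ≤ x}) := mul_le_mul_right h1 _
    _ = gaussianReal 0 v {x : ℝ | 0 ≤ x} := by
        rw [← mul_assoc, ENNReal.inv_mul_cancel (by norm_num) (by norm_num), one_mul]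

lemma gauss_half_le (v : ℝ≥0) : (2:ℝ≥0∞)⁻¹ ≤ gaussianReal 0 v {x : ℝ | x ≤ 0} := by
  rw [gauss_half_eq]; exact gauss_half_ge v

lemma gauss_tail_neg (v : ℝ≥0) (a : ℝ) :
    gaussianReal 0 v {x : ℝ | x ≤ -a} = gaussianReal 0 v {x : ℝ | a ≤ x} := by
  have h := gauss_sym v {x : ℝ | a ≤ x} measurableSet_Ici
  rwa [show ((fun x : ℝ => -x) ⁻¹' {x : ℝ | a ≤ x}) = {x : ℝ | x ≤ -a} from by
    ext x; simp [le_neg]] at h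

lemma levy_max {Ω : Type} [MeasurableSpace Ω] (μ : Measure Ω) [IsProbabilityMeasure μ]
    (n : ℕ) (Y : Fin n → Ω → ℝ) (hm : ∀ i, Measurable (Y i))
    (hind : iIndepFun Y μ)
    (hhalf : ∀ k : ℕ, k ≤ n →
      (2:ℝ≥0∞)⁻¹ ≤ μ {ω | 0 ≤ ∑ i ∈ Finset.univ.filter (fun i : Fin n => k ≤ (i:ℕ)), Y i ω})
    (a : ℝ) :
    μ {ω | ∃ k ≤ n, a ≤ ∑ i ∈ Finset.univ.filter (fun i : Fin n => (i:ℕ) < k), Y i ω}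
      ≤ 2 * μ {ω | a ≤ ∑ i, Y i ω} := by
  set W : ℕ → Ω → ℝ :=
    fun k ω => ∑ i ∈ Finset.univ.filter (fun i : Fin n => (i:ℕ) < k), Y i ω with hW
  set T : ℕ → Ω → ℝ :=
    fun k ω => ∑ i ∈ Finset.univ.filter (fun i : Fin n => k ≤ (i:ℕ)), Y i ω with hT
  have hWT : ∀ k ω, W k ω + T k ω = ∑ i, Y i ω := by
    intro k ω
    rw [hW, hT]
    simp only
    rw [← Finset.sum_filter_add_sum_filter_not Finset.univ
      (fun i : Fin n => (i:ℕ) < k) (fun i => Y i ω)]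
    congr 1
    apply Finset.sum_congr _ (fun _ _ => rfl)
    ext i; simp [not_lt]
  have hWmeas : ∀ k, Measurable (W k) := fun k => Finset.measurable_sum _ (fun i _ => hm i)
  set D : ℕ → Set Ω := fun k => {ω | a ≤ W k ω} ∩ ⋂ j ∈ Finset.range k, {ω | W j ω < a} with hD
  set mS : ℕ → MeasurableSpace Ω := fun k =>
    ⨆ i ∈ {i : Fin n | (i:ℕ) < k}, MeasurableSpace.comap (Y i) inferInstance with hmS
  set mT : ℕ → MeasurableSpace Ω := fun k =>
    ⨆ i ∈ {i : Fin n | k ≤ (i:ℕ)}, MeasurableSpace.comap (Y i) inferInstance with hmT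
  have hYS : ∀ k, ∀ i : Fin n, (i:ℕ) < k → Measurable[mS k] (Y i) := by
    intro k i hi
    apply Measurable.of_comap_le
    exact le_iSup₂ (f := fun (i : Fin n) (_ : i ∈ {i : Fin n | (i:ℕ) < k}) =>
      MeasurableSpace.comap (Y i) inferInstance) i hi
  have hWS : ∀ k j, j ≤ k → Measurable[mS k] (W j) := by
    intro k j hj
    apply Finset.measurable_sum
    intro i hi
    simp only [Finset.mem_filter] at hi
    exact hYS k i (lt_of_lt_of_le hi.2 hj)
  have hTmeasT : ∀ k, Measurable[mT k] (T k) := by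
    intro k
    apply Finset.measurable_sum
    intro i hi
    simp only [Finset.mem_filter] at hi
    apply Measurable.of_comap_le
    exact le_iSup₂ (f := fun (i : Fin n) (_ : i ∈ {i : Fin n | k ≤ (i:ℕ)}) =>
      MeasurableSpace.comap (Y i) inferInstance) i hi.2
  have hDS : ∀ k, MeasurableSet[mS k] (D k) := by
    intro k
    apply MeasurableSet.inter
    · exact measurableSet_le measurable_const (hWS k k le_rfl)
    · exact Finset.measurableSet_biInter _ (fun j hj =>
        measurableSet_lt (hWS k j (le_of_lt (Finset.mem_range.mp hj))) measurable_const)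
  have hDT : ∀ k, MeasurableSet[mT k] {ω | 0 ≤ T k ω} :=
    fun k => measurableSet_le measurable_const (hTmeasT k)
  have hindep : ∀ k, Indep (mS k) (mT k) μ := by
    intro k
    apply indep_iSup_of_disjoint (fun i => (hm i).comap_le) hind
    exact Set.disjoint_left.mpr (fun i h1 h2 => by simp only [Set.mem_setOf_eq] at h1 h2; omega)
  have hmul : ∀ k, μ (D k ∩ {ω | 0 ≤ T k ω}) = μ (D k) * μ {ω | 0 ≤ T k ω} := fun k =>
    (Indep_iff _ _ _).mp (hindep k) _ _ (hDS k) (hDT k)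
  have hDmeas0 : ∀ k, MeasurableSet (D k) := fun k =>
    (measurableSet_le measurable_const (hWmeas k)).inter
      (Finset.measurableSet_biInter _ fun j _ => measurableSet_lt (hWmeas j) measurable_const)
  have hTmeas0 : ∀ k, MeasurableSet {ω | 0 ≤ T k ω} :=
    fun k => measurableSet_le measurable_const (Finset.measurable_sum _ fun i _ => hm i)
  have hstep : ∀ k, k ≤ n → μ (D k) ≤ 2 * μ (D k ∩ {ω | 0 ≤ T k ω}) := by
    intro k hk
    rw [hmul k]
    calc μ (D k) = 2 * (2⁻¹ * μ (D k)) := by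
          rw [← mul_assoc, ENNReal.mul_inv_cancel (by norm_num) (by norm_num), one_mul]
      _ ≤ 2 * (μ {ω | 0 ≤ T k ω} * μ (D k)) :=
          mul_le_mul_right (mul_le_mul_left (hhalf k hk) _) _
      _ = 2 * (μ (D k) * μ {ω | 0 ≤ T k ω}) := by rw [mul_comm (μ (D k))]
  have hcup : {ω | ∃ k ≤ n, a ≤ W k ω} = ⋃ k ∈ Finset.range (n+1), D k := by
    ext ω
    simp only [Set.mem_setOf_eq, Set.mem_iUnion, Finset.mem_range, hD, Set.mem_inter_iff,
      Set.mem_iInter, exists_prop]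
    constructor
    · rintro ⟨k, hk, hak⟩
      have hex : ∃ m, a ≤ W m ω := ⟨k, hak⟩
      refine ⟨Nat.find hex, ?_, Nat.find_spec hex, ?_⟩
      · exact Nat.lt_succ_of_le (le_trans (Nat.find_min' hex hak) hk)
      · intro j hj
        exact lt_of_not_ge (Nat.find_min hex hj)
    · rintro ⟨k, hk, hak, _⟩
      exact ⟨k, Nat.lt_succ_iff.mp hk, hak⟩
  have hdisj : (↑(Finset.range (n+1)) : Set ℕ).PairwiseDisjoint
      (fun k => D k ∩ {ω | 0 ≤ T k ω}) := by
    intro k _ l _ hkl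
    apply Set.disjoint_left.mpr
    rintro ω ⟨hk, _⟩ ⟨hl, _⟩
    rcases lt_or_gt_of_ne hkl with h | h
    · have hlt : W k ω < a := Set.mem_iInter₂.mp hl.2 k (Finset.mem_range.mpr h)
      exact absurd hk.1 (not_le.mpr hlt)
    · have hlt : W l ω < a := Set.mem_iInter₂.mp hk.2 l (Finset.mem_range.mpr h)
      exact absurd hl.1 (not_le.mpr hlt)
  rw [hcup]
  calc μ (⋃ k ∈ Finset.range (n+1), D k)
      ≤ ∑ k ∈ Finset.range (n+1), μ (D k) := measure_biUnion_finset_le _ _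
    _ ≤ ∑ k ∈ Finset.range (n+1), 2 * μ (D k ∩ {ω | 0 ≤ T k ω}) :=
        Finset.sum_le_sum (fun k hk => hstep k (Nat.lt_succ_iff.mp (Finset.mem_range.mp hk)))
    _ = 2 * ∑ k ∈ Finset.range (n+1), μ (D k ∩ {ω | 0 ≤ T k ω}) := (Finset.mul_sum _ _ _).symm
    _ = 2 * μ (⋃ k ∈ Finset.range (n+1), (D k ∩ {ω | 0 ≤ T k ω})) := by
        rw [measure_biUnion_finset hdisj (fun k _ => (hDmeas0 k).inter (hTmeas0 k))]
    _ ≤ 2 * μ {ω | a ≤ ∑ i, Y i ω} := by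
        apply mul_le_mul_right
        apply measure_mono
        intro ω hω
        simp only [Set.mem_iUnion, exists_prop] at hω
        obtain ⟨k, _, hωk⟩ := hω
        have h1 : a ≤ W k ω := hωk.1.1
        have h2 : 0 ≤ T k ω := hωk.2
        have h3 := hWT k ω
        simp only [Set.mem_setOf_eq]
        linarith
end Helpers

/-- A standard one-dimensional Brownian motion starting at `0`: measurable marginals,
a.s. continuous paths, Gaussian increments `N(0, t-s)`, and independent increments. -/
def IsBrownianMotion {Ω : Type*} [MeasurableSpace Ω] (μ : Measure Ω)
    (B : ℝ → Ω → ℝ) : Prop :=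
  (∀ t : ℝ, Measurable (B t)) ∧
  (∀ᵐ ω ∂μ, B 0 ω = 0) ∧
  (∀ᵐ ω ∂μ, Continuous fun t => B t ω) ∧
  (∀ s t : ℝ, 0 ≤ s → s ≤ t →
    μ.map (fun ω => B t ω - B s ω) = gaussianReal 0 (Real.toNNReal (t - s))) ∧
  (∀ (n : ℕ) (t : Fin (n + 1) → ℝ), Monotone t →
    iIndepFun
      (fun i : Fin n => fun ω => B (t i.succ) ω - B (t i.castSucc) ω) μ)

theorem stmt_17 (C : ℝ) (hC : 0 < C) :
    ∃ C' : ℝ, 0 < C' ∧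
      ∀ γ p : ℝ, 0 < γ → γ < 1/2 → 0 < p →
      ∀ (Ω : Type) (mΩ : MeasurableSpace Ω) (μ : Measure Ω), IsProbabilityMeasure μ →
      ∀ (ξ : ℕ → Ω → ℝ) (S : ℕ → Ω → ℝ) (B : ℝ → Ω → ℝ),
        (∀ i, Measurable (ξ i)) →
        -- i.i.d. steps
        iIndepFun ξ μ →
        (∀ i, μ.map (ξ i) = μ.map (ξ 0)) →
        -- mean 0, variance 1, finite third absolute moment
        (∫ ω, ξ 0 ω ∂μ = 0) →
        (∫ ω, (ξ 0 ω) ^ 2 ∂μ = 1) →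
        Integrable (fun ω => |ξ 0 ω| ^ 3) μ →
        -- S is the random walk with steps ξ
        (∀ k ω, S k ω = ∑ i ∈ Finset.range k, ξ i ω) →
        IsBrownianMotion μ B →
        ∀ (n : ℕ) (M : ℝ), 1 ≤ n → Real.sqrt n ≤ M → (n : ℝ) ^ γ ≤ M / 3 →
        -- the KMT-type coupling bound
        μ {ω | ∃ k ≤ n, (n : ℝ) ^ γ < |S k ω - B (k : ℝ) ω|} ≤
          ENNReal.ofReal (C / (n : ℝ) ^ p) →
        μ {ω | ∃ k ≤ n, M ≤ |S k ω|} ≤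
          ENNReal.ofReal (C' * ((Real.sqrt n / M) * Real.exp (-(M ^ 2) / (18 * n)) +
            (n : ℝ) ^ (-p))) := by
  refine ⟨C + 6, by linarith, ?_⟩
  intro γ p hγ hγ2 hp Ω mΩ μ hμ ξ S B hξmeas hξind hξid hmean hvar h3 hS hBM n M hn hM hM3 hKMT
  obtain ⟨hBmeas, hB0, _, hlaw, hinc⟩ := hBM
  have hn0 : (0:ℝ) < n := by exact_mod_cast Nat.lt_of_lt_of_le Nat.zero_lt_one hn
  have hsq1 : (1:ℝ) ≤ Real.sqrt n := by
    rw [show (1:ℝ) = Real.sqrt 1 from Real.sqrt_one.symm]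
    exact Real.sqrt_le_sqrt (by exact_mod_cast hn)
  have hM0 : 0 < M := lt_of_lt_of_le one_pos (le_trans hsq1 hM)
  set a : ℝ := 2 * M / 3 with ha_def
  have ha0 : 0 < a := by positivity
  -- the increments
  set Y : Fin n → Ω → ℝ := fun i ω => B (((i:ℕ):ℝ) + 1) ω - B ((i:ℕ):ℝ) ω with hY
  have hYmeas : ∀ i, Measurable (Y i) := fun i => (hBmeas _).sub (hBmeas _)
  have hYind : iIndepFun Y μ := by
    have hmono : Monotone (fun j : Fin (n+1) => ((j:ℕ):ℝ)) := by
      intro x y hxy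
      simp only
      exact_mod_cast hxy
    have h := hinc n (fun j : Fin (n+1) => ((j:ℕ):ℝ)) hmono
    have hYeq : (fun (i : Fin n) => fun ω =>
        B (((i.succ : Fin (n+1)):ℕ):ℝ) ω - B (((i.castSucc : Fin (n+1)):ℕ):ℝ) ω) = Y := by
      funext i ω
      rw [hY]
      simp only [Fin.val_succ, Fin.coe_castSucc]
      push_cast
      ring_nf
    rwa [hYeq] at h
  -- telescoping sums
  have hkey : ∀ k, k ≤ n → ∀ ω,
      (∑ i ∈ Finset.univ.filter (fun i : Fin n => (i:ℕ) < k), Y i ω)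
        = B ((k:ℕ):ℝ) ω - B 0 ω := by
    intro k
    induction k with
    | zero =>
      intro _ ω
      have : Finset.univ.filter (fun i : Fin n => (i:ℕ) < 0) = ∅ := by
        apply Finset.filter_false_of_mem; intro i _; omega
      simp [this]
    | succ k ih =>
      intro hk ω
      have hk' : k ≤ n := Nat.le_of_succ_le hk
      have hkn : k < n := hk
      have hins : Finset.univ.filter (fun i : Fin n => (i:ℕ) < k + 1)
          = insert (⟨k, hkn⟩ : Fin n) (Finset.univ.filter (fun i : Fin n => (i:ℕ) < k)) := by
        ext i
        simp only [Finset.mem_filter, Finset.mem_univ, true_and, Finset.mem_insert, Fin.ext_iff]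
        omega
      rw [hins, Finset.sum_insert (by simp), ih hk']
      rw [hY]
      simp only
      push_cast
      ring
  have hsplit : ∀ (k : ℕ) ω,
      (∑ i ∈ Finset.univ.filter (fun i : Fin n => (i:ℕ) < k), Y i ω)
      + (∑ i ∈ Finset.univ.filter (fun i : Fin n => k ≤ (i:ℕ)), Y i ω) = ∑ i, Y i ω := by
    intro k ω
    rw [← Finset.sum_filter_add_sum_filter_not Finset.univ
      (fun i : Fin n => (i:ℕ) < k) (fun i => Y i ω)]
    congr 1
    apply Finset.sum_congr _ (fun _ _ => rfl)
    ext i; simp [not_lt]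
  have huniv : ∀ ω, (∑ i, Y i ω) = B ((n:ℕ):ℝ) ω - B 0 ω := by
    intro ω
    have h1 := hkey n le_rfl ω
    rwa [Finset.filter_true_of_mem (fun i _ => i.isLt)] at h1
  have htail : ∀ k, k ≤ n → ∀ ω,
      (∑ i ∈ Finset.univ.filter (fun i : Fin n => k ≤ (i:ℕ)), Y i ω)
        = B ((n:ℕ):ℝ) ω - B ((k:ℕ):ℝ) ω := by
    intro k hk ω
    have h1 := hsplit k ω
    have h2 := hkey k hk ω
    have h3 := huniv ω
    linarith
  -- laws
  set v : ℝ≥0 := Real.toNNReal (n:ℝ) with hv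
  have hvco : (v:ℝ) = (n:ℝ) := Real.coe_toNNReal _ hn0.le
  have hvpos : 0 < (v:ℝ) := by rw [hvco]; exact hn0
  have hfn : Measurable (fun ω => B ((n:ℕ):ℝ) ω - B 0 ω) := (hBmeas _).sub (hBmeas _)
  have hmapn : μ.map (fun ω => B ((n:ℕ):ℝ) ω - B 0 ω) = gaussianReal 0 v := by
    have h := hlaw 0 ((n:ℕ):ℝ) le_rfl (by exact_mod_cast hn0.le)
    rw [sub_zero] at h
    exact h
  -- half probabilities for the tails
  have hhalfplus : ∀ k : ℕ, k ≤ n →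
      (2:ℝ≥0∞)⁻¹ ≤ μ {ω | 0 ≤ ∑ i ∈ Finset.univ.filter (fun i : Fin n => k ≤ (i:ℕ)), Y i ω} := by
    intro k hk
    have hset : {ω | 0 ≤ ∑ i ∈ Finset.univ.filter (fun i : Fin n => k ≤ (i:ℕ)), Y i ω}
        = (fun ω => B ((n:ℕ):ℝ) ω - B ((k:ℕ):ℝ) ω) ⁻¹' {x : ℝ | 0 ≤ x} := by
      ext ω; simp only [Set.mem_setOf_eq, Set.mem_preimage, htail k hk ω]
    rw [hset]
    have hms : MeasurableSet ({x : ℝ | 0 ≤ x}) := measurableSet_Ici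
    have hma := Measure.map_apply (μ := μ) (f := fun ω => B ((n:ℕ):ℝ) ω - B ((k:ℕ):ℝ) ω) ((hBmeas ((n:ℕ):ℝ)).sub (hBmeas ((k:ℕ):ℝ)))
      hms
    rw [← hma, hlaw ((k:ℕ):ℝ) ((n:ℕ):ℝ) (by positivity) (by exact_mod_cast hk)]
    exact gauss_half_ge _
  have hhalfminus : ∀ k : ℕ, k ≤ n →
      (2:ℝ≥0∞)⁻¹ ≤ μ {ω | 0 ≤ ∑ i ∈ Finset.univ.filter (fun i : Fin n => k ≤ (i:ℕ)),
        -(Y i ω)} := by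
    intro k hk
    have hset : {ω | 0 ≤ ∑ i ∈ Finset.univ.filter (fun i : Fin n => k ≤ (i:ℕ)), -(Y i ω)}
        = (fun ω => B ((n:ℕ):ℝ) ω - B ((k:ℕ):ℝ) ω) ⁻¹' {x : ℝ | x ≤ 0} := by
      ext ω
      simp only [Set.mem_setOf_eq, Set.mem_preimage, Finset.sum_neg_distrib, htail k hk ω]
      constructor <;> intro h <;> linarith
    rw [hset]
    have hms : MeasurableSet ({x : ℝ | x ≤ 0}) := measurableSet_Iic
    have hma := Measure.map_apply (μ := μ) (f := fun ω => B ((n:ℕ):ℝ) ω - B ((k:ℕ):ℝ) ω) ((hBmeas ((n:ℕ):ℝ)).sub (hBmeas ((k:ℕ):ℝ)))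
      hms
    rw [← hma, hlaw ((k:ℕ):ℝ) ((n:ℕ):ℝ) (by positivity) (by exact_mod_cast hk)]
    exact gauss_half_le _
  -- Levy applications
  have hYind' : iIndepFun (fun i ω => -(Y i ω)) μ :=
    hYind.comp (fun _ => fun x : ℝ => -x) (fun _ => measurable_neg)
  have hlevyP := levy_max μ n Y hYmeas hYind hhalfplus a
  have hlevyM := levy_max μ n (fun i ω => -(Y i ω)) (fun i => (hYmeas i).neg) hYind'
    hhalfminus a
  -- gaussian tail value
  set t : ℝ := Real.sqrt n / a * Real.exp (-a ^ 2 / (2 * (n:ℝ))) with ht_def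
  have ht0 : 0 ≤ t := by positivity
  have hgt : gaussianReal 0 v {x : ℝ | a ≤ x} ≤ ENNReal.ofReal t := by
    have h := gauss_tail hvpos ha0
    rwa [hvco] at h
  have hEndP : μ {ω | a ≤ ∑ i, Y i ω} ≤ ENNReal.ofReal t := by
    have hset : {ω | a ≤ ∑ i, Y i ω}
        = (fun ω => B ((n:ℕ):ℝ) ω - B 0 ω) ⁻¹' {x : ℝ | a ≤ x} := by
      ext ω; simp only [Set.mem_setOf_eq, Set.mem_preimage, huniv ω]
    rw [hset]
    have hms : MeasurableSet ({x : ℝ | a ≤ x}) := measurableSet_Ici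
    have hma := Measure.map_apply (μ := μ) hfn hms
    rw [← hma, hmapn]
    exact hgt
  have hEndM : μ {ω | a ≤ ∑ i, -(Y i ω)} ≤ ENNReal.ofReal t := by
    have hset : {ω | a ≤ ∑ i, -(Y i ω)}
        = (fun ω => B ((n:ℕ):ℝ) ω - B 0 ω) ⁻¹' {x : ℝ | x ≤ -a} := by
      ext ω
      simp only [Set.mem_setOf_eq, Set.mem_preimage, Finset.sum_neg_distrib, huniv ω]
      constructor <;> intro h <;> linarith
    rw [hset]
    have hms : MeasurableSet ({x : ℝ | x ≤ -a}) := measurableSet_Iic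
    have hma := Measure.map_apply (μ := μ) hfn
      hms
    rw [← hma, hmapn, gauss_tail_neg]
    exact hgt
  -- bound on the gaussian part
  have hGcongr : μ {ω | ∃ k ≤ n, a ≤ |B ((k:ℕ):ℝ) ω|}
      = μ {ω | ∃ k ≤ n, a ≤ |B ((k:ℕ):ℝ) ω - B 0 ω|} := by
    apply measure_congr
    rw [Filter.eventuallyEq_set]
    filter_upwards [hB0] with ω h0
    simp [h0]
  have hGsub : {ω | ∃ k ≤ n, a ≤ |B ((k:ℕ):ℝ) ω - B 0 ω|} ⊆
      {ω | ∃ k ≤ n, a ≤ ∑ i ∈ Finset.univ.filter (fun i : Fin n => (i:ℕ) < k), Y i ω} ∪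
      {ω | ∃ k ≤ n, a ≤ ∑ i ∈ Finset.univ.filter (fun i : Fin n => (i:ℕ) < k), -(Y i ω)} := by
    rintro ω ⟨k, hk, hak⟩
    rcases le_abs.mp hak with h | h
    · left; exact ⟨k, hk, by rw [hkey k hk ω]; exact h⟩
    · right
      refine ⟨k, hk, ?_⟩
      rw [Finset.sum_neg_distrib, hkey k hk ω]
      linarith
  have hGbound : μ {ω | ∃ k ≤ n, a ≤ |B ((k:ℕ):ℝ) ω|}
      ≤ ENNReal.ofReal (2 * t) + ENNReal.ofReal (2 * t) := by
    rw [hGcongr]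
    have h2t : ENNReal.ofReal (2 * t) = 2 * ENNReal.ofReal t := by
      rw [ENNReal.ofReal_mul (by norm_num), ENNReal.ofReal_ofNat]
    refine le_trans (measure_mono hGsub) (le_trans (measure_union_le _ _) ?_)
    rw [h2t]
    exact add_le_add (hlevyP.trans (mul_le_mul_right hEndP 2))
      (hlevyM.trans (mul_le_mul_right hEndM 2))
  -- main inclusion
  have hmain : {ω | ∃ k ≤ n, M ≤ |S k ω|} ⊆
      {ω | ∃ k ≤ n, (n:ℝ) ^ γ < |S k ω - B ((k:ℕ):ℝ) ω|} ∪
      {ω | ∃ k ≤ n, a ≤ |B ((k:ℕ):ℝ) ω|} := by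
    rintro ω ⟨k, hk, hMk⟩
    by_cases hcase : (n:ℝ) ^ γ < |S k ω - B ((k:ℕ):ℝ) ω|
    · left; exact ⟨k, hk, hcase⟩
    · right
      refine ⟨k, hk, ?_⟩
      push_neg at hcase
      have htri : |S k ω| - |B ((k:ℕ):ℝ) ω| ≤ |S k ω - B ((k:ℕ):ℝ) ω| :=
        abs_sub_abs_le_abs_sub _ _
      rw [ha_def]
      linarith
  -- final assembly
  set X : ℝ := Real.sqrt n / M * Real.exp (-(M ^ 2) / (18 * (n:ℝ))) with hX_def
  have hX0 : 0 ≤ X := by positivity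
  have hnp0 : 0 ≤ (n:ℝ) ^ (-p) := Real.rpow_nonneg hn0.le _
  have hCp0 : 0 ≤ C / (n:ℝ) ^ p := by positivity
  have htX : t ≤ 3 / 2 * X := by
    rw [ht_def, hX_def, ha_def]
    have hexp : Real.exp (-(2 * M / 3) ^ 2 / (2 * (n:ℝ)))
        ≤ Real.exp (-(M ^ 2) / (18 * (n:ℝ))) := by
      apply Real.exp_le_exp.mpr
      rw [div_le_div_iff₀ (by positivity) (by positivity)]
      nlinarith [sq_nonneg M]
    have heq : Real.sqrt n / (2 * M / 3) = 3 / 2 * (Real.sqrt n / M) := by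
      field_simp
    rw [heq]
    calc 3 / 2 * (Real.sqrt ↑n / M) * Real.exp (-(2 * M / 3) ^ 2 / (2 * (n:ℝ)))
        ≤ 3 / 2 * (Real.sqrt ↑n / M) * Real.exp (-(M ^ 2) / (18 * (n:ℝ))) := by
          apply mul_le_mul_of_nonneg_left hexp (by positivity)
      _ = 3 / 2 * (Real.sqrt ↑n / M * Real.exp (-(M ^ 2) / (18 * (n:ℝ)))) := by ring
  have hreal : C / (n:ℝ) ^ p + (2 * t + 2 * t) ≤ (C + 6) * (X + (n:ℝ) ^ (-p)) := by
    have hCnp : C / (n:ℝ) ^ p = C * (n:ℝ) ^ (-p) := by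
      rw [Real.rpow_neg hn0.le, div_eq_mul_inv]
    rw [hCnp]
    nlinarith [hX0, hnp0, hC, htX]
  calc μ {ω | ∃ k ≤ n, M ≤ |S k ω|}
      ≤ μ ({ω | ∃ k ≤ n, (n:ℝ) ^ γ < |S k ω - B ((k:ℕ):ℝ) ω|} ∪
          {ω | ∃ k ≤ n, a ≤ |B ((k:ℕ):ℝ) ω|}) := measure_mono hmain
    _ ≤ μ {ω | ∃ k ≤ n, (n:ℝ) ^ γ < |S k ω - B ((k:ℕ):ℝ) ω|}
        + μ {ω | ∃ k ≤ n, a ≤ |B ((k:ℕ):ℝ) ω|} := measure_union_le _ _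
    _ ≤ ENNReal.ofReal (C / (n:ℝ) ^ p)
        + (ENNReal.ofReal (2 * t) + ENNReal.ofReal (2 * t)) := add_le_add hKMT hGbound
    _ = ENNReal.ofReal (C / (n:ℝ) ^ p + (2 * t + 2 * t)) := by
        rw [← ENNReal.ofReal_add (by positivity) (by positivity),
          ← ENNReal.ofReal_add hCp0 (by positivity)]
    _ ≤ ENNReal.ofReal ((C + 6) * (X + (n:ℝ) ^ (-p))) := ENNReal.ofReal_le_ofReal hreal
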